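/- For every integer n ≥ 0, the deterministic random walk satisfies S_n(2√2) ≥ 0. -/

import Mathlib

/-!
Let `r_k` be the integer nearest to `k√2`, `e_k = k√2 - r_k ∈ [-1/2, 1/2)` and `K_k = 3k + 2r_k`.
Then `2√2 (K_k + j) = 2(3r_k + 4k) + 2(3 - 2√2)e_k + 2j√2` with `|2(3 - 2√2)e_k| < 0.18`, so the
signs `(-1)^⌊2√2 m⌋` for `K_k < m ≤ K_{k+1}` form one of the blocks `+-+--`, `+-+-+`, `+-+-+--`,
according to the position of `e_k` relative to `1 - √2` and `3/2 - √2`; the same comparisons show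
that the block sums to the sign at `k + 1`. Hence `S_{K_k} = S_k`, and since every proper prefix of a
block has a non-negative sum, each `S_n` is some `S_k` with `k < n` plus a non-negative number.
-/

/-- The deterministic random walk `S_n(ξ) = ∑_{j=1}^n (-1)^⌊j·ξ⌋`. -/
noncomputable def S (ξ : ℝ) (n : ℕ) : ℤ :=
  ∑ j ∈ Finset.Icc 1 n, ((Int.negOnePow ⌊(j : ℝ) * ξ⌋ : ℤˣ) : ℤ)

namespace DeterministicWalk

noncomputable def step (ξ : ℝ) (j : ℕ) : ℤ := ((Int.negOnePow ⌊(j : ℝ) * ξ⌋ : ℤˣ) : ℤ)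

theorem S_succ (ξ : ℝ) (n : ℕ) : S ξ (n + 1) = S ξ n + step ξ (n + 1) :=
  Finset.sum_Icc_succ_top (by omega) _

theorem step_eq_one {ξ : ℝ} {j : ℕ} (q : ℤ) (h₁ : 2 * q ≤ j * ξ) (h₂ : j * ξ < 2 * q + 1) :
    step ξ j = 1 := by
  have hfloor : ⌊(j : ℝ) * ξ⌋ = 2 * q :=
    Int.floor_eq_iff.2 ⟨by exact_mod_cast h₁, by push_cast; linarith⟩
  rw [step, hfloor, Int.negOnePow_even _ (even_two_mul q), Units.val_one]

theorem step_eq_neg_one {ξ : ℝ} {j : ℕ} (q : ℤ) (h₁ : 2 * q + 1 ≤ j * ξ)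
    (h₂ : j * ξ < 2 * q + 2) : step ξ j = -1 := by
  have hfloor : ⌊(j : ℝ) * ξ⌋ = 2 * q + 1 :=
    Int.floor_eq_iff.2 ⟨by exact_mod_cast h₁, by push_cast; linarith⟩
  rw [step, hfloor, Int.negOnePow_odd _ (odd_two_mul_add_one q), Units.val_neg, Units.val_one]

theorem S_add_eq_add_sum_take {ξ : ℝ} {m : ℕ} {L : List ℤ}
    (h : ∀ i (hi : i < L.length), step ξ (m + i + 1) = L[i]) :
    ∀ i ≤ L.length, S ξ (m + i) = S ξ m + (L.take i).sum
  | 0, _ => by simp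
  | i + 1, hi => by
    rw [← add_assoc, S_succ, S_add_eq_add_sum_take h i (by omega), h i hi,
      List.sum_take_succ _ _ hi, add_assoc]

theorem sqrt_two_mem_Ioo : √2 ∈ Set.Ioo 1.4 1.415 := by
  constructor
  · rw [Real.lt_sqrt (by norm_num)]; norm_num
  · rw [Real.sqrt_lt' (by norm_num)]; norm_num

noncomputable def nearest (k : ℕ) : ℕ := ⌊k * √2 + 1 / 2⌋₊

noncomputable def err (k : ℕ) : ℝ := k * √2 - nearest k

noncomputable def blockStart (k : ℕ) : ℕ := 3 * k + 2 * nearest k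

noncomputable def drift (k : ℕ) : ℝ := (3 - 2 * √2) * err k

theorem blockStart_zero : blockStart 0 = 0 := by
  norm_num [blockStart, nearest]

theorem err_mem_Ico (k : ℕ) : err k ∈ Set.Ico (-(1 / 2)) (1 / 2) := by
  have h₁ := Nat.floor_le (by positivity : 0 ≤ (k : ℝ) * √2 + 1 / 2)
  have h₂ := Nat.lt_floor_add_one ((k : ℝ) * √2 + 1 / 2)
  rw [err, nearest]
  constructor <;> linarith

theorem drift_mem_Ico (k : ℕ) : drift k ∈ Set.Ico (√2 - 3 / 2) (3 / 2 - √2) := by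
  obtain ⟨he₁, he₂⟩ := err_mem_Ico k
  have hpos : 0 < 3 - 2 * √2 := by linarith [sqrt_two_mem_Ioo.2]
  rw [drift]
  constructor <;> nlinarith

theorem nearest_succ {k m : ℕ} (h₁ : m ≤ err k + √2 + 1 / 2) (h₂ : err k + √2 + 1 / 2 < m + 1) :
    nearest (k + 1) = nearest k + m := by
  rw [nearest, Nat.floor_eq_iff (by positivity)]
  have : ((k : ℝ) + 1) * √2 = nearest k + err k + √2 := by rw [err]; ring
  push_cast
  constructor <;> linarith

theorem cast_succ_mul_two_mul_sqrt_two (k : ℕ) :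
    ((k + 1 : ℕ) : ℝ) * (2 * √2) = 2 * (nearest k : ℤ) + 2 * err k + 2 * √2 := by
  rw [err]; push_cast; ring

theorem cast_blockStart_add_mul_two_mul_sqrt_two (k j : ℕ) :
    ((blockStart k + j : ℕ) : ℝ) * (2 * √2) =
      2 * ((3 * nearest k + 4 * k : ℕ) : ℤ) + 2 * drift k + 2 * j * √2 := by
  rw [drift, err, blockStart]
  push_cast
  linear_combination 4 * (k : ℝ) * Real.sq_sqrt zero_le_two

theorem step_blockStart_add_eq_one {k : ℕ} (i : ℕ) (c : ℤ)
    (h₁ : 2 * c ≤ 2 * drift k + 2 * (i + 1) * √2)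
    (h₂ : 2 * drift k + 2 * (i + 1) * √2 < 2 * c + 1) :
    step (2 * √2) (blockStart k + i + 1) = 1 := by
  have h := cast_blockStart_add_mul_two_mul_sqrt_two k (i + 1)
  rw [← add_assoc] at h
  exact step_eq_one (3 * nearest k + 4 * k + c) (by rw [h]; push_cast at h₁ ⊢; linarith)
    (by rw [h]; push_cast at h₂ ⊢; linarith)

theorem step_blockStart_add_eq_neg_one {k : ℕ} (i : ℕ) (c : ℤ)
    (h₁ : 2 * c + 1 ≤ 2 * drift k + 2 * (i + 1) * √2)
    (h₂ : 2 * drift k + 2 * (i + 1) * √2 < 2 * c + 2) :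
    step (2 * √2) (blockStart k + i + 1) = -1 := by
  have h := cast_blockStart_add_mul_two_mul_sqrt_two k (i + 1)
  rw [← add_assoc] at h
  exact step_eq_neg_one (3 * nearest k + 4 * k + c) (by rw [h]; push_cast at h₁ ⊢; linarith)
    (by rw [h]; push_cast at h₂ ⊢; linarith)

structure IsBlock (k : ℕ) (L : List ℤ) : Prop where
  blockStart_succ : blockStart (k + 1) = blockStart k + L.length
  step_eq : ∀ i (hi : i < L.length), step (2 * √2) (blockStart k + i + 1) = L[i]
  sum_eq : L.sum = step (2 * √2) (k + 1)

theorem IsBlock.S_add {k : ℕ} {L : List ℤ} (hL : IsBlock k L) {i : ℕ} (hi : i ≤ L.length) :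
    S (2 * √2) (blockStart k + i) = S (2 * √2) (blockStart k) + (L.take i).sum :=
  S_add_eq_add_sum_take hL.step_eq i hi

theorem isBlock_of_err_lt {k : ℕ} (h : err k < 1 - √2) : IsBlock k [1, -1, 1, -1, -1] := by
  obtain ⟨hα₁, hα₂⟩ := sqrt_two_mem_Ioo
  obtain ⟨hd₁, hd₂⟩ := drift_mem_Ico k
  have he := (err_mem_Ico k).1
  have hd : drift k < 7 - 5 * √2 := by
    rw [drift]; nlinarith [Real.sq_sqrt zero_le_two]
  refine ⟨?_, ?_, ?_⟩
  · rw [blockStart, blockStart, nearest_succ (m := 1) (by push_cast; linarith)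
      (by push_cast; linarith)]
    simp only [List.length_cons, List.length_nil]
    ring
  · intro i hi
    simp only [List.length_cons, List.length_nil] at hi
    interval_cases i
    · exact step_blockStart_add_eq_one 0 1 (by push_cast; linarith) (by push_cast; linarith)
    · exact step_blockStart_add_eq_neg_one 1 2 (by push_cast; linarith) (by push_cast; linarith)
    · exact step_blockStart_add_eq_one 2 4 (by push_cast; linarith) (by push_cast; linarith)
    · exact step_blockStart_add_eq_neg_one 3 5 (by push_cast; linarith) (by push_cast; linarith)
    · exact step_blockStart_add_eq_neg_one 4 6 (by push_cast; linarith) (by push_cast; linarith)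
  · rw [step_eq_neg_one (nearest k) (by rw [cast_succ_mul_two_mul_sqrt_two]; linarith)
      (by rw [cast_succ_mul_two_mul_sqrt_two]; linarith)]
    rfl

theorem isBlock_of_err_mem_Ico {k : ℕ} (h : err k ∈ Set.Ico (1 - √2) (3 / 2 - √2)) :
    IsBlock k [1, -1, 1, -1, 1] := by
  obtain ⟨hα₁, hα₂⟩ := sqrt_two_mem_Ioo
  obtain ⟨hd₁, hd₂⟩ := drift_mem_Ico k
  obtain ⟨he₁, he₂⟩ := h
  have hd : 7 - 5 * √2 ≤ drift k := by
    rw [drift]; nlinarith [Real.sq_sqrt zero_le_two]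
  refine ⟨?_, ?_, ?_⟩
  · rw [blockStart, blockStart, nearest_succ (m := 1) (by push_cast; linarith)
      (by push_cast; linarith)]
    simp only [List.length_cons, List.length_nil]
    ring
  · intro i hi
    simp only [List.length_cons, List.length_nil] at hi
    interval_cases i
    · exact step_blockStart_add_eq_one 0 1 (by push_cast; linarith) (by push_cast; linarith)
    · exact step_blockStart_add_eq_neg_one 1 2 (by push_cast; linarith) (by push_cast; linarith)
    · exact step_blockStart_add_eq_one 2 4 (by push_cast; linarith) (by push_cast; linarith)
    · exact step_blockStart_add_eq_neg_one 3 5 (by push_cast; linarith) (by push_cast; linarith)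
    · exact step_blockStart_add_eq_one 4 7 (by push_cast; linarith) (by push_cast; linarith)
  · rw [step_eq_one (nearest k + 1) (by rw [cast_succ_mul_two_mul_sqrt_two]; push_cast; linarith)
      (by rw [cast_succ_mul_two_mul_sqrt_two]; push_cast; linarith)]
    rfl

theorem isBlock_of_le_err {k : ℕ} (h : 3 / 2 - √2 ≤ err k) :
    IsBlock k [1, -1, 1, -1, 1, -1, -1] := by
  obtain ⟨hα₁, hα₂⟩ := sqrt_two_mem_Ioo
  obtain ⟨hd₁, hd₂⟩ := drift_mem_Ico k
  have he := (err_mem_Ico k).2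
  have hd : 17 / 2 - 6 * √2 ≤ drift k := by
    rw [drift]; nlinarith [Real.sq_sqrt zero_le_two]
  refine ⟨?_, ?_, ?_⟩
  · rw [blockStart, blockStart, nearest_succ (m := 2) (by push_cast; linarith)
      (by push_cast; linarith)]
    simp only [List.length_cons, List.length_nil]
    ring
  · intro i hi
    simp only [List.length_cons, List.length_nil] at hi
    interval_cases i
    · exact step_blockStart_add_eq_one 0 1 (by push_cast; linarith) (by push_cast; linarith)
    · exact step_blockStart_add_eq_neg_one 1 2 (by push_cast; linarith) (by push_cast; linarith)
    · exact step_blockStart_add_eq_one 2 4 (by push_cast; linarith) (by push_cast; linarith)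
    · exact step_blockStart_add_eq_neg_one 3 5 (by push_cast; linarith) (by push_cast; linarith)
    · exact step_blockStart_add_eq_one 4 7 (by push_cast; linarith) (by push_cast; linarith)
    · exact step_blockStart_add_eq_neg_one 5 8 (by push_cast; linarith) (by push_cast; linarith)
    · exact step_blockStart_add_eq_neg_one 6 9 (by push_cast; linarith) (by push_cast; linarith)
  · rw [step_eq_neg_one (nearest k + 1)
      (by rw [cast_succ_mul_two_mul_sqrt_two]; push_cast; linarith)
      (by rw [cast_succ_mul_two_mul_sqrt_two]; push_cast; linarith)]
    rfl

def blocks : List (List ℤ) :=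
  [[1, -1, 1, -1, -1], [1, -1, 1, -1, 1], [1, -1, 1, -1, 1, -1, -1]]

theorem exists_isBlock (k : ℕ) : ∃ L ∈ blocks, IsBlock k L := by
  rcases lt_or_ge (err k) (1 - √2) with h₁ | h₁
  · exact ⟨_, by simp [blocks], isBlock_of_err_lt h₁⟩
  rcases lt_or_ge (err k) (3 / 2 - √2) with h₂ | h₂
  · exact ⟨_, by simp [blocks], isBlock_of_err_mem_Ico ⟨h₁, h₂⟩⟩
  · exact ⟨_, by simp [blocks], isBlock_of_le_err h₂⟩

theorem sum_take_nonneg_of_mem_blocks : ∀ L ∈ blocks, ∀ i < L.length, 0 ≤ (L.take i).sum := by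
  decide

theorem S_blockStart (k : ℕ) : S (2 * √2) (blockStart k) = S (2 * √2) k := by
  induction k with
  | zero => rw [blockStart_zero]
  | succ k ih =>
    obtain ⟨L, -, hL⟩ := exists_isBlock k
    rw [hL.blockStart_succ, hL.S_add le_rfl, List.take_length, ih, hL.sum_eq, S_succ]

theorem exists_blockStart_le_lt (n : ℕ) : ∃ k, blockStart k ≤ n ∧ n < blockStart (k + 1) := by
  have hex : ∃ k, n < blockStart k := ⟨n + 1, by rw [blockStart]; omega⟩
  obtain ⟨k, hk⟩ : ∃ k, Nat.find hex = k + 1 :=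
    Nat.exists_eq_add_one_of_ne_zero fun h => by simpa [h, blockStart_zero] using Nat.find_spec hex
  exact ⟨k, not_lt.1 (Nat.find_min hex (by omega)), hk ▸ Nat.find_spec hex⟩

theorem S_two_mul_sqrt_two_nonneg (n : ℕ) : 0 ≤ S (2 * √2) n := by
  induction n using Nat.strong_induction_on with
  | _ n ih =>
  rcases n.eq_zero_or_pos with rfl | hn
  · rfl
  obtain ⟨k, hkn, hnk⟩ := exists_blockStart_le_lt n
  obtain ⟨L, hmem, hL⟩ := exists_isBlock k
  obtain ⟨i, hi, rfl⟩ : ∃ i < L.length, n = blockStart k + i :=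
    ⟨n - blockStart k, by rw [hL.blockStart_succ] at hnk; omega, by omega⟩
  have hk : k < blockStart k + i := by rw [blockStart] at hn ⊢; omega
  rw [hL.S_add hi.le, S_blockStart]
  exact add_nonneg (ih k hk) (sum_take_nonneg_of_mem_blocks L hmem i hi)

end DeterministicWalk

theorem stmt_0 (n : ℕ) : 0 ≤ S (2 * Real.sqrt 2) n :=
  DeterministicWalk.S_two_mul_sqrt_two_nonneg n
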